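/- arXiv:2605.30799 — 2 statements merged into one kernel-verified Lean document; each statement's English description precedes it below -/
import Mathlib

section
/- There exists a subset S of the semidihedral group SD(16) of order 16, with 1 ∉ S and S closed under inverses, such that the Cayley graph Cay(SD(16), S) is isomorphic to the Möbius–Kantor graph MK. -/
/-- The underlying relation of the Möbius–Kantor graph `GP(8,3)`. -/
def mkRel (v w : ZMod 8 × Fin 2) : Bool :=
  (v.2 == 0 && w.2 == 0 && (w.1 == v.1 + 1 || v.1 == w.1 + 1)) ||
  ((v.2 == 0 && w.2 == 1 || v.2 == 1 && w.2 == 0) && v.1 == w.1) ||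
  (v.2 == 1 && w.2 == 1 && (w.1 == v.1 + 3 || v.1 == w.1 + 3))

/-- The Möbius–Kantor graph, i.e. the generalized Petersen graph `GP(8,3)`. -/
def MK : SimpleGraph (ZMod 8 × Fin 2) where
  Adj v w := mkRel v w = true
  symm := by constructor; intro v w; revert v w; decide
  loopless := by constructor; intro v; revert v; decide

/-- The Cayley graph of a group `G` with respect to a connection set `S`
not containing `1` and closed under inverses. -/
def cayleyGraph {G : Type*} [Group G] (S : Set G)
    (h1 : (1 : G) ∉ S) (hinv : ∀ s ∈ S, s⁻¹ ∈ S) : SimpleGraph G where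
  Adj x y := x⁻¹ * y ∈ S
  symm := by
    constructor
    intro x y h
    have := hinv _ h
    simpa [_root_.mul_inv_rev] using this
  loopless := by
    constructor
    intro x h
    simp only [inv_mul_cancel] at h
    exact h1 h

/-- The automorphism `x ↦ 3x` of `Multiplicative (ZMod 8)`. -/
def sigma : MulAut (Multiplicative (ZMod 8)) where
  toFun x := Multiplicative.ofAdd (3 * x.toAdd)
  invFun x := Multiplicative.ofAdd (3 * x.toAdd)
  left_inv := by decide
  right_inv := by decide
  map_mul' x y := by
    show Multiplicative.ofAdd (3 * (x * y).toAdd)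
      = Multiplicative.ofAdd (3 * x.toAdd) * Multiplicative.ofAdd (3 * y.toAdd)
    rw [toAdd_mul, mul_add, ofAdd_add]

lemma sigma_sq : sigma * sigma = 1 := by
  ext x
  show Multiplicative.ofAdd (3 * (3 * x.toAdd)) = x
  have h : (3 : ZMod 8) * (3 * x.toAdd) = x.toAdd := by
    rw [← mul_assoc]
    norm_num
    rw [show (9 : ZMod 8) = 1 by decide, one_mul]
  rw [h]
  rfl

/-- The action of `ZMod 2` on `ZMod 8` where the nontrivial element acts by `x ↦ 3x`. -/
def sdAction : Multiplicative (ZMod 2) →* MulAut (Multiplicative (ZMod 8)) where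
  toFun g := if g.toAdd = 0 then 1 else sigma
  map_one' := by simp
  map_mul' x y := by
    have h : ∀ z : ZMod 2, z = 0 ∨ z = 1 := by decide
    have h2 : (1 + 1 : ZMod 2) = 0 := by decide
    have h10 : (1 : ZMod 2) ≠ 0 := by decide
    rcases h x.toAdd with hx | hx <;> rcases h y.toAdd with hy | hy <;>
      simp [toAdd_mul, hx, hy, h2, h10, sigma_sq]

/-- The semidihedral group `SD(16)`, as the semidirect product `(ZMod 8) ⋊ (ZMod 2)`
where the nontrivial element of `ZMod 2` acts by `x ↦ 3x`. -/
abbrev SD16 := SemidirectProduct (Multiplicative (ZMod 8)) (Multiplicative (ZMod 2)) sdAction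


/-! Write `a = (1, 0)` and `b = (0, 1)` in `(ZMod 8) ⋊ (ZMod 2)`. Right multiplication by `a`
sends `(i, ε)` to `(i + 3^ε, ε)`: one step along the outer 8-cycle when `ε = 0` and three steps
along the inner octagram when `ε = 1`, precisely because the twist is `x ↦ 3x`. Right
multiplication by `b` is the spoke `(i, ε) ↦ (i, ε + 1)`. Hence the coordinate map
`SD(16) → ZMod 8 × Fin 2` carries `Cay(SD(16), {a, a⁻¹, b})` onto `GP(8,3)`. -/

theorem cayleyGraph_adj_iff_exists_mul {G : Type*} [Group G] {S : Set G} (h1 : (1 : G) ∉ S)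
    (hinv : ∀ s ∈ S, s⁻¹ ∈ S) {x y : G} :
    (cayleyGraph S h1 hinv).Adj x y ↔ ∃ s ∈ S, y = x * s :=
  ⟨fun h => ⟨_, h, (mul_inv_cancel_left x y).symm⟩, by rintro ⟨s, hs, rfl⟩; simpa [cayleyGraph]⟩

theorem MK_adj_iff {v w : ZMod 8 × Fin 2} :
    MK.Adj v w ↔
      w = (v.1 + ![1, 3] v.2, v.2) ∨ w = (v.1 - ![1, 3] v.2, v.2) ∨ w = (v.1, v.2 + 1) := by
  change mkRel v w = true ↔ _
  revert v w
  decide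

theorem sdAction_apply_toAdd (g : Multiplicative (ZMod 2)) (n : Multiplicative (ZMod 8)) :
    (sdAction g n).toAdd = ![1, 3] g.toAdd * n.toAdd := by
  revert g n
  decide

namespace SD16

open SemidirectProduct

def a : SD16 := inl (.ofAdd 1)

def b : SD16 := inr (.ofAdd 1)

-- `ZMod 2` is definitionally `Fin 2`, so the `right` coordinate needs no conversion.
def toVertex : SD16 ≃ ZMod 8 × Fin 2 :=
  equivProd.trans (Multiplicative.toAdd.prodCongr Multiplicative.toAdd)

theorem toVertex_apply (x : SD16) : toVertex x = (x.left.toAdd, x.right.toAdd) := rfl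

theorem toVertex_mul_a (x : SD16) :
    toVertex (x * a) = ((toVertex x).1 + ![1, 3] (toVertex x).2, (toVertex x).2) := by
  ext
  · simp [toVertex_apply, a, mul_left, sdAction_apply_toAdd]
  · simp [toVertex_apply, a]

theorem toVertex_mul_a_inv (x : SD16) :
    toVertex (x * a⁻¹) = ((toVertex x).1 - ![1, 3] (toVertex x).2, (toVertex x).2) := by
  ext
  · simp [toVertex_apply, a, mul_left, inv_left, sdAction_apply_toAdd, sub_eq_add_neg]
  · simp [toVertex_apply, a]

theorem toVertex_mul_b (x : SD16) : toVertex (x * b) = ((toVertex x).1, (toVertex x).2 + 1) :=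
  Prod.ext (by simp [toVertex_apply, b]) rfl

theorem b_inv : b⁻¹ = b := by decide

theorem one_notMem_generators : (1 : SD16) ∉ ({a, a⁻¹, b} : Set SD16) := by
  decide

theorem inv_mem_generators :
    ∀ s ∈ ({a, a⁻¹, b} : Set SD16), s⁻¹ ∈ ({a, a⁻¹, b} : Set SD16) := by
  rintro s (rfl | rfl | rfl) <;> simp [b_inv]

end SD16

/-- The Möbius–Kantor graph is a Cayley graph of the semidihedral group `SD(16)`. -/
theorem moebiusKantor_cayley_semidihedral :
    ∃ (S : Set SD16) (h1 : (1 : SD16) ∉ S) (hinv : ∀ s ∈ S, s⁻¹ ∈ S),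
      Nonempty (cayleyGraph S h1 hinv ≃g MK) := by
  refine ⟨_, SD16.one_notMem_generators, SD16.inv_mem_generators,
    ⟨⟨SD16.toVertex, fun {x y} => ?_⟩⟩⟩
  rw [cayleyGraph_adj_iff_exists_mul, MK_adj_iff, ← SD16.toVertex_mul_a,
    ← SD16.toVertex_mul_a_inv, ← SD16.toVertex_mul_b]
  simp only [SD16.toVertex.apply_eq_iff_eq, Set.mem_insert_iff, Set.mem_singleton_iff,
    exists_eq_or_imp, exists_eq_left]
end

section
/- There exists a set M of 8 pairwise disjoint edges of the tesseract graph Q4 (a perfect matching) such that the graph obtained from Q4 by deleting the edges in M is isomorphic to the Möbius–Kantor graph MK. -/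
/-- The tesseract graph `Q4`: vertices are elements of `Fin 4 → ZMod 2`, two vertices
being adjacent iff they differ in exactly one coordinate. -/
def Q4 : SimpleGraph (Fin 4 → ZMod 2) where
  Adj v w := (Finset.univ.filter fun i => v i ≠ w i).card = 1
  symm := by
    constructor
    intro v w h
    beta_reduce at h ⊢
    have : (Finset.univ.filter fun i => w i ≠ v i)
        = (Finset.univ.filter fun i => v i ≠ w i) := by
      apply Finset.filter_congr
      intro i _
      exact ⟨Ne.symm, Ne.symm⟩
    rw [this]
    exact h
  loopless := by
    constructor
    intro v h
    simp at h

instance : DecidableRel Q4.Adj :=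
  fun v w => inferInstanceAs (Decidable ((Finset.univ.filter fun i => v i ≠ w i).card = 1))

/-!
The map `mkToQ4` embeds the Möbius–Kantor graph in `Q4` as a spanning subgraph: the outer
8-cycle runs around `Q4` flipping the coordinates `0, 1, 2, 3, 0, 1, 2, 3` in turn, and the
spoke at `i` flips coordinate `i + 1 (mod 4)`. Since `Q4` is 4-regular and `MK` is
3-regular, the edges of `Q4` outside the image form a 1-regular spanning subgraph, i.e. a
perfect matching with `16 / 2 = 8` edges, and deleting it leaves exactly the image of `MK`.
-/

open Finset

namespace SimpleGraph

variable {V W : Type*} {G H : SimpleGraph V}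

theorem IsRegularOfDegree.comap_equiv {G : SimpleGraph W} (f : V ≃ W) [G.LocallyFinite]
    [(G.comap f).LocallyFinite] {d : ℕ} (h : G.IsRegularOfDegree d) :
    (G.comap f).IsRegularOfDegree d := fun v ↦ by
  rw [← (Iso.comap f G).degree_eq v]
  exact h _

theorem IsRegularOfDegree.sdiff_of_le [DecidableEq V] [G.LocallyFinite] [H.LocallyFinite]
    [(G \ H).LocallyFinite] {d e : ℕ} (hle : H ≤ G) (hG : G.IsRegularOfDegree d)
    (hH : H.IsRegularOfDegree e) : (G \ H).IsRegularOfDegree (d - e) := by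
  intro v
  have hsub : H.neighborFinset v ⊆ G.neighborFinset v := by
    simpa [← Finset.coe_subset] using neighborSet_mono hle v
  rw [← card_neighborFinset_eq_degree, neighborFinset_sdiff, card_sdiff_of_subset hsub,
    card_neighborFinset_eq_degree, card_neighborFinset_eq_degree, hG, hH]

theorem IsRegularOfDegree.two_mul_card_edgeFinset [Fintype V] [DecidableRel G.Adj]
    [Fintype G.edgeSet] {d : ℕ} (h : G.IsRegularOfDegree d) :
    2 * #G.edgeFinset = Fintype.card V * d := by
  convert G.sum_degrees_eq_twice_card_edges.symm
  simp [h.degree_eq]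

theorem IsRegularOfDegree.edge_eq_of_mem_of_mem [G.LocallyFinite] (h : G.IsRegularOfDegree 1)
    {e f : Sym2 V} (he : e ∈ G.edgeSet) (hf : f ∈ G.edgeSet) {v : V} (hve : v ∈ e)
    (hvf : v ∈ f) : e = f := by
  obtain ⟨u, hu⟩ := card_eq_one.1 (h.degree_eq v)
  obtain ⟨a, rfl⟩ := Sym2.mem_iff_exists.1 hve
  obtain ⟨b, rfl⟩ := Sym2.mem_iff_exists.1 hvf
  have ha : a ∈ G.neighborFinset v := (mem_neighborFinset _ _ _).2 he
  have hb : b ∈ G.neighborFinset v := (mem_neighborFinset _ _ _).2 hf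
  rw [hu, mem_singleton] at ha hb
  rw [ha, hb]

theorem Hom.comap_ofBijective_symm_le {G : SimpleGraph W} (f : H →g G)
    (hf : Function.Bijective f) : H.comap (Equiv.ofBijective f hf).symm ≤ G := fun a b hab ↦ by
  convert f.map_adj hab <;> exact ((Equiv.ofBijective f hf).apply_symm_apply _).symm

end SimpleGraph

open SimpleGraph

instance : DecidableRel MK.Adj := fun v w ↦ inferInstanceAs (Decidable (mkRel v w = true))

theorem Q4_isRegularOfDegree_four : Q4.IsRegularOfDegree 4 := by
  unfold IsRegularOfDegree; decide

theorem MK_isRegularOfDegree_three : MK.IsRegularOfDegree 3 := by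
  unfold IsRegularOfDegree; decide

/-- `(i + 3 - k) / 4` counts the steps `j < i` with `j ≡ k (mod 4)`, i.e. the flips of
coordinate `k` so far. -/
def q4Cycle (i : ZMod 8) : Fin 4 → ZMod 2 := fun k ↦ ((i.val + 3 - k.val) / 4 : ℕ)

def mkToQ4 : MK →g Q4 where
  toFun
    | (i, 0) => q4Cycle i
    | (i, 1) => q4Cycle i + Pi.single (Fin.ofNat 4 (i.val + 1)) 1
  map_rel' {v w} := by revert v w; decide

theorem mkToQ4_bijective : Function.Bijective mkToQ4 :=
  (Fintype.bijective_iff_injective_and_card _).2 ⟨by decide, rfl⟩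

/-- Deleting a suitable perfect matching of 8 pairwise disjoint edges from the
tesseract graph yields a graph isomorphic to the Möbius–Kantor graph. -/
theorem tesseract_minus_matching_iso_moebiusKantor :
    ∃ M : Finset (Sym2 (Fin 4 → ZMod 2)),
      M ⊆ Q4.edgeFinset ∧
      M.card = 8 ∧
      (∀ e ∈ M, ∀ f ∈ M, e ≠ f → ∀ v, v ∈ e → v ∉ f) ∧
      Nonempty (Q4.deleteEdges (M : Set (Sym2 (Fin 4 → ZMod 2))) ≃g MK) := by
  let ψ := (Equiv.ofBijective mkToQ4 mkToQ4_bijective).symm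
  have hle : MK.comap ψ ≤ Q4 := mkToQ4.comap_ofBijective_symm_le mkToQ4_bijective
  have hM : (Q4 \ MK.comap ψ).IsRegularOfDegree 1 :=
    Q4_isRegularOfDegree_four.sdiff_of_le hle (MK_isRegularOfDegree_three.comap_equiv ψ)
  refine ⟨(Q4 \ MK.comap ψ).edgeFinset, edgeFinset_mono sdiff_le, ?_, ?_, ⟨?_⟩⟩
  · have : 2 * #(Q4 \ MK.comap ψ).edgeFinset = 16 * 1 := hM.two_mul_card_edgeFinset
    omega
  · intro e he f hf hne v hve hvf
    exact hne (hM.edge_eq_of_mem_of_mem (mem_edgeFinset.1 he) (mem_edgeFinset.1 hf) hve hvf)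
  · rw [coe_edgeFinset, deleteEdges_edgeSet, sdiff_sdiff_eq_self hle]
    exact Iso.comap ψ MK
end
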